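/- For each x ∈ Iⁿ let Φ(x) ∈ L²(μ) be (the class of) the indicator function of {u : B(x,u)·B(o,u) < 0}, where o = (1,0,…,0). Then Φ(x) is indeed square-integrable for every x ∈ Iⁿ, and for all x, y ∈ Iⁿ, ‖Φ(x) - Φ(y)‖²_{L²(μ)} = μ({u : B(x,u)·B(y,u) < 0}). -/

import Mathlib

open MeasureTheory Real Metric

noncomputable section

/-- The Minkowski bilinear form on `ℝ^{n+1} = ℝ × ℝⁿ`:
`B(x,y) = -x₀y₀ + x₁y₁ + ⋯ + xₙyₙ`. -/
def minkB {n : ℕ} (x y : ℝ × EuclideanSpace ℝ (Fin n)) : ℝ :=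
  -(x.1 * y.1) + inner ℝ x.2 y.2

/-- The hyperboloid model of hyperbolic `n`-space:
`Iⁿ = {x : B(x,x) = -1, x₀ > 0}`. -/
def hypI (n : ℕ) : Set (ℝ × EuclideanSpace ℝ (Fin n)) :=
  {x | minkB x x = -1 ∧ 0 < x.1}

/-- The parametrization `Φ(r,ω) = (sinh r, (cosh r)·ω)` of de Sitter space by `ℝ × S^{n-1}`. -/
def dSParam (n : ℕ) (p : ℝ × sphere (0 : EuclideanSpace ℝ (Fin n)) 1) :
    ℝ × EuclideanSpace ℝ (Fin n) :=
  (Real.sinh p.1, Real.cosh p.1 • (p.2 : EuclideanSpace ℝ (Fin n)))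

/-- The measure `μ` on `ℝ^{n+1}`: the pushforward under `Φ(r,ω) = (sinh r, (cosh r)·ω)` of
the measure `(cosh r)^{n-1} dr dω` on `ℝ × S^{n-1}`, where `dr` is Lebesgue measure and `dω`
is the standard spherical measure on the unit sphere `S^{n-1} ⊆ ℝⁿ`. -/
def wallMeasure (n : ℕ) : Measure (ℝ × EuclideanSpace ℝ (Fin n)) :=
  Measure.map (dSParam n)
    (((volume : Measure ℝ).withDensity
        (fun r => ENNReal.ofReal (Real.cosh r ^ (n - 1)))).prod
      ((volume : Measure (EuclideanSpace ℝ (Fin n))).toSphere))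

/-- The basepoint `o = (1, 0, …, 0) ∈ Iⁿ`. -/
def basept (n : ℕ) : ℝ × EuclideanSpace ℝ (Fin n) := (1, 0)

/-- `Φ(x)`: the indicator function of the set of walls separating `x` from the basepoint `o`. -/
def wallInd (n : ℕ) (x : ℝ × EuclideanSpace ℝ (Fin n)) :
    (ℝ × EuclideanSpace ℝ (Fin n)) → ℝ :=
  Set.indicator {u | minkB x u * minkB (basept n) u < 0} (fun _ => (1 : ℝ))

/-! Write `x = (x₀, x')` and `u = Φ(r, ω)`. Then `B(o, u) = -sinh r`, and the wall `B(x, u) = 0`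
meets each line `ω = const` in at most one point (where `tanh r = ⟨x', ω⟩ / x₀`), so walls are
`μ`-null. Off these walls, `u` separates `x` from `y` iff it separates exactly one of them from `o`,
so `|Φ(x) - Φ(y)|` is a.e. the indicator of the walls separating `x` and `y`. For square
integrability, a wall separating `x` from `o` has `|sinh r| ≤ ‖x'‖`, so it lies over a compact set
of `r`, which has finite measure for the continuous density `(cosh r)^{n-1}`. -/

open scoped symmDiff

theorem eLpNorm_indicator_sub_indicator_sq {α : Type*} [MeasurableSpace α] {μ : Measure α}
    {s t : Set α} (hst : NullMeasurableSet (s ∆ t) μ) :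
    eLpNorm (s.indicator (fun _ => (1 : ℝ)) - t.indicator fun _ => 1) 2 μ ^ 2 = μ (s ∆ t) := by
  rw [eLpNorm_indicator_sub_indicator,
    eLpNorm_indicator_const₀ hst two_ne_zero ENNReal.ofNat_ne_top, enorm_one, one_mul,
    ← ENNReal.rpow_natCast, ← ENNReal.rpow_mul]
  norm_num

theorem xor_mul_neg_iff {a b c : ℝ} (ha : a ≠ 0) (hb : b ≠ 0) (hc : c ≠ 0) :
    Xor (a * c < 0) (b * c < 0) ↔ a * b < 0 := by
  rcases ha.lt_or_gt with ha | ha <;> rcases hb.lt_or_gt with hb | hb <;>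
    rcases hc.lt_or_gt with hc | hc <;>
    simp [xor_def, mul_neg_iff, ha, hb, hc, ha.not_gt, hb.not_gt, hc.not_gt]

variable {n : ℕ}

theorem continuous_minkB (x : ℝ × EuclideanSpace ℝ (Fin n)) : Continuous (minkB x) := by
  unfold minkB; fun_prop

theorem measurable_dSParam : Measurable (dSParam n) := by
  apply Continuous.measurable; unfold dSParam; fun_prop

theorem minkB_dSParam (z : ℝ × EuclideanSpace ℝ (Fin n))
    (p : ℝ × sphere (0 : EuclideanSpace ℝ (Fin n)) 1) :
    minkB z (dSParam n p) =
      -(z.1 * sinh p.1) + cosh p.1 * inner ℝ z.2 (p.2 : EuclideanSpace ℝ (Fin n)) := by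
  simp only [minkB, dSParam, real_inner_smul_right]

theorem measurableSet_minkB_mul_minkB_neg (x y : ℝ × EuclideanSpace ℝ (Fin n)) :
    MeasurableSet {u | minkB x u * minkB y u < 0} :=
  (isOpen_lt ((continuous_minkB x).mul (continuous_minkB y)) continuous_const).measurableSet

theorem subsingleton_minkB_dSParam_eq_zero {z : ℝ × EuclideanSpace ℝ (Fin n)} (hz : z.1 ≠ 0)
    (ω : sphere (0 : EuclideanSpace ℝ (Fin n)) 1) :
    {r | minkB z (dSParam n (r, ω)) = 0}.Subsingleton := by
  have tanh_eq : ∀ r, minkB z (dSParam n (r, ω)) = 0 →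
      tanh r = inner ℝ z.2 (ω : EuclideanSpace ℝ (Fin n)) / z.1 := by
    intro r hr
    rw [minkB_dSParam] at hr
    rw [tanh_eq_sinh_div_cosh, div_eq_div_iff (cosh_pos r).ne' hz]
    linear_combination -hr
  exact fun r₁ h₁ r₂ h₂ => tanh_injective ((tanh_eq r₁ h₁).trans (tanh_eq r₂ h₂).symm)

theorem ae_minkB_ne_zero {z : ℝ × EuclideanSpace ℝ (Fin n)} (hz : z.1 ≠ 0) :
    ∀ᵐ u ∂wallMeasure n, minkB z u ≠ 0 := by
  have hwall : MeasurableSet {u | minkB z u = 0} :=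
    (isClosed_eq (continuous_minkB z) continuous_const).measurableSet
  simp only [ae_iff, not_not]
  rw [wallMeasure, Measure.map_apply measurable_dSParam hwall,
    Measure.prod_apply_symm (measurable_dSParam hwall)]
  refine (lintegral_congr fun ω => ?_).trans lintegral_zero
  exact withDensity_absolutelyContinuous _ _
    ((subsingleton_minkB_dSParam_eq_zero hz ω).countable.measure_zero _)

theorem abs_sinh_le_of_separates {x : ℝ × EuclideanSpace ℝ (Fin n)} (hx : x ∈ hypI n)
    {p : ℝ × sphere (0 : EuclideanSpace ℝ (Fin n)) 1}
    (hp : minkB x (dSParam n p) * minkB (basept n) (dSParam n p) < 0) : |sinh p.1| ≤ ‖x.2‖ := by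
  obtain ⟨r, ω⟩ := p
  set k := inner ℝ x.2 (ω : EuclideanSpace ℝ (Fin n))
  have hk : |k| ≤ ‖x.2‖ := by
    simpa [norm_eq_of_mem_sphere ω] using abs_real_inner_le_norm x.2 (ω : EuclideanSpace ℝ (Fin n))
  have hx₁ : x.1 ^ 2 = 1 + ‖x.2‖ ^ 2 := by
    have h := hx.1
    rw [minkB, real_inner_self_eq_norm_sq] at h
    linarith
  have hbase : minkB (basept n) (dSParam n (r, ω)) = -sinh r := by
    simp [minkB_dSParam, basept]
  rw [minkB_dSParam, hbase] at hp
  have hlt : x.1 * |sinh r| ^ 2 < |sinh r| * (cosh r * ‖x.2‖) := by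
    calc x.1 * |sinh r| ^ 2 = x.1 * sinh r ^ 2 := by rw [sq_abs]
      _ < sinh r * cosh r * k := by linarith
      _ ≤ |sinh r * cosh r * k| := le_abs_self _
      _ = |sinh r| * (cosh r * |k|) := by rw [abs_mul, abs_mul, abs_of_pos (cosh_pos r)]; ring
      _ ≤ |sinh r| * (cosh r * ‖x.2‖) := by gcongr
  have hs : 0 < |sinh r| := by
    by_contra! h
    rw [abs_nonpos_iff.1 h] at hlt
    simp at hlt
  have hle : x.1 * |sinh r| ≤ cosh r * ‖x.2‖ := by nlinarith
  have hsq : (x.1 * |sinh r|) ^ 2 ≤ (cosh r * ‖x.2‖) ^ 2 :=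
    pow_le_pow_left₀ (mul_nonneg hx.2.le hs.le) hle 2
  -- with `x₀² = 1 + ‖x'‖²` and `cosh² = 1 + sinh²`, squaring leaves `sinh² r ≤ ‖x'‖²`
  refine (sq_le_sq₀ (abs_nonneg _) (norm_nonneg _)).1 ?_
  rw [mul_pow, mul_pow, hx₁, cosh_sq', sq_abs] at hsq
  rw [sq_abs]
  nlinarith

theorem wallMeasure_separating_basept_lt_top {x : ℝ × EuclideanSpace ℝ (Fin n)}
    (hx : x ∈ hypI n) :
    wallMeasure n {u | minkB x u * minkB (basept n) u < 0} < ⊤ := by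
  have hsub : dSParam n ⁻¹' {u | minkB x u * minkB (basept n) u < 0}
      ⊆ (sinh ⁻¹' Set.Icc (-‖x.2‖) ‖x.2‖) ×ˢ Set.univ :=
    fun p hp => ⟨abs_le.1 (abs_sinh_le_of_separates hx hp), trivial⟩
  have : IsLocallyFiniteMeasure ((volume : Measure ℝ).withDensity
      fun r => ENNReal.ofReal (cosh r ^ (n - 1))) :=
    IsLocallyFiniteMeasure.withDensity_ofReal (by fun_prop)
  rw [wallMeasure, Measure.map_apply measurable_dSParam (measurableSet_minkB_mul_minkB_neg _ _)]
  refine (measure_mono hsub).trans_lt ?_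
  rw [Measure.prod_prod]
  exact ENNReal.mul_lt_top (sinhHomeomorph.isCompact_preimage.2 isCompact_Icc).measure_lt_top
    (measure_lt_top _ _)

theorem separating_symmDiff_ae_eq {x y z : ℝ × EuclideanSpace ℝ (Fin n)} (hx : x.1 ≠ 0)
    (hy : y.1 ≠ 0) (hz : z.1 ≠ 0) :
    {u | minkB x u * minkB z u < 0} ∆ {u | minkB y u * minkB z u < 0}
      =ᵐ[wallMeasure n] {u | minkB x u * minkB y u < 0} := by
  filter_upwards [ae_minkB_ne_zero hx, ae_minkB_ne_zero hy, ae_minkB_ne_zero hz]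
    with u hxu hyu hzu
  exact propext (xor_mul_neg_iff hxu hyu hzu)

theorem wallInd_memL2_and_dist_general (n : ℕ) :
    (∀ x ∈ hypI n, MemLp (wallInd n x) 2 (wallMeasure n)) ∧
    (∀ x ∈ hypI n, ∀ y ∈ hypI n,
      (eLpNorm (wallInd n x - wallInd n y) 2 (wallMeasure n)) ^ 2
        = wallMeasure n {u : ℝ × EuclideanSpace ℝ (Fin n) | minkB x u * minkB y u < 0}) := by
  refine ⟨fun x hx => memLp_indicator_const 2 (measurableSet_minkB_mul_minkB_neg x _) 1
    (Or.inr (wallMeasure_separating_basept_lt_top hx).ne), fun x hx y hy => ?_⟩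
  rw [wallInd, wallInd, eLpNorm_indicator_sub_indicator_sq
    ((measurableSet_minkB_mul_minkB_neg x _).symmDiff
      (measurableSet_minkB_mul_minkB_neg y _)).nullMeasurableSet]
  exact measure_congr (separating_symmDiff_ae_eq hx.2.ne' hy.2.ne' one_ne_zero)

/-- Each `Φ(x)` is square-integrable with respect to `μ`, and
`‖Φ(x) - Φ(y)‖²_{L²(μ)} = μ({u : B(x,u)·B(y,u) < 0})`. -/
theorem wallInd_memL2_and_dist (n : ℕ) (hn : 2 ≤ n) :
    (∀ x ∈ hypI n, MemLp (wallInd n x) 2 (wallMeasure n)) ∧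
    (∀ x ∈ hypI n, ∀ y ∈ hypI n,
      (eLpNorm (wallInd n x - wallInd n y) 2 (wallMeasure n)) ^ 2
        = wallMeasure n {u : ℝ × EuclideanSpace ℝ (Fin n) | minkB x u * minkB y u < 0}) :=
  wallInd_memL2_and_dist_general n

end
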